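/- arXiv:math/9812028 — 2 statements merged into one kernel-verified Lean document; each statement's English description precedes it below -/
import Mathlib

section
/- A finitely generated group which is wide is not virtually free. Equivalently, every finitely generated virtually free group is narrow. -/
open List

namespace FreeGroupAux

open FreeGroup

variable {α : Type*} [DecidableEq α]

/-- Non-cancellation of two consecutive letters. -/
def NC (a b : α × Bool) : Prop := ¬ (a.1 = b.1 ∧ b.2 = !a.2)

lemma chain'_of_reduce_eq {w : List (α × Bool)} (h : FreeGroup.reduce w = w) :
    w.Chain' NC := by
  rw [List.Chain', List.isChain_iff_getElem]
  intro i hi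
  by_contra hc
  have hi1 : i < w.length := by omega
  have hi2 : i + 1 < w.length := by omega
  have hc' : ((w.get ⟨i, by omega⟩).1 = (w.get ⟨i+1, by omega⟩).1 ∧
      (w.get ⟨i+1, by omega⟩).2 = !(w.get ⟨i, by omega⟩).2) := not_not.mp hc
  simp only [List.get_eq_getElem] at hc'
  have hb : w[i+1] = (w[i].1, !w[i].2) := by
    apply Prod.ext
    · exact hc'.1.symm
    · exact hc'.2
  have d1 : w.drop i = (w[i].1, w[i].2) :: (w[i].1, !w[i].2) :: w.drop (i+2) := by
    rw [List.drop_eq_getElem_cons hi1, List.drop_eq_getElem_cons hi2, hb]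
  have hdec : w = w.take i ++ (w[i].1, w[i].2) :: (w[i].1, !w[i].2) :: w.drop (i+2) := by
    conv_lhs => rw [← List.take_append_drop i w, d1]
  exact FreeGroup.reduce.not (p := False) (by rw [h]; exact hdec)

lemma reduce_eq_self_of_chain' {w : List (α × Bool)} (h : w.Chain' NC) :
    FreeGroup.reduce w = w := by
  have hred : FreeGroup.Red w (FreeGroup.reduce w) := FreeGroup.reduce.red
  rcases Relation.ReflTransGen.cases_head hred with heq | ⟨c, hstep, -⟩
  · exact heq.symm
  · exfalso
    cases hstep with
    | @not L₁ L₂ x b =>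
      have hinf : [(x, b), (x, !b)] <:+: L₁ ++ (x, b) :: (x, !b) :: L₂ := ⟨L₁, L₂, by simp⟩
      have := h.infix hinf
      rw [List.isChain_pair] at this
      exact this ⟨rfl, rfl⟩

lemma chain'_toWord (x : FreeGroup α) : x.toWord.Chain' NC :=
  chain'_of_reduce_eq (FreeGroup.reduce_toWord x)

lemma toWord_mk_of_chain' {w : List (α × Bool)} (h : w.Chain' NC) :
    (FreeGroup.mk w).toWord = w := by
  rw [FreeGroup.toWord_mk, reduce_eq_self_of_chain' h]

lemma norm_mk_of_chain' {w : List (α × Bool)} (h : w.Chain' NC) :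
    (FreeGroup.mk w).norm = w.length := by
  rw [FreeGroup.norm, toWord_mk_of_chain' h]

omit [DecidableEq α] in
lemma chain'_invRev {w : List (α × Bool)} (h : w.Chain' NC) :
    (FreeGroup.invRev w).Chain' NC := by
  rw [FreeGroup.invRev, List.Chain', List.isChain_reverse, List.isChain_map]
  refine h.imp ?_
  intro a b hab
  rintro ⟨h1, h2⟩
  simp only [Bool.not_not] at h2
  exact hab ⟨h1.symm, by simp [h2]⟩

lemma norm_inv_mul {u v : FreeGroup α} (hu : u ≠ 1) (hv : v ≠ 1)
    (h : u.toWord.head? ≠ v.toWord.head?) :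
    (u⁻¹ * v).norm = u.norm + v.norm := by
  have hu' : u.toWord ≠ [] := fun hh => hu (FreeGroup.toWord_eq_nil_iff.mp hh)
  have hv' : v.toWord ≠ [] := fun hh => hv (FreeGroup.toWord_eq_nil_iff.mp hh)
  obtain ⟨a, ta, hta⟩ := List.exists_cons_of_ne_nil hu'
  obtain ⟨b, tb, htb⟩ := List.exists_cons_of_ne_nil hv'
  have e1 : u⁻¹ * v = FreeGroup.mk (FreeGroup.invRev u.toWord ++ v.toWord) := by
    rw [← FreeGroup.mul_mk, ← FreeGroup.inv_mk, FreeGroup.mk_toWord, FreeGroup.mk_toWord]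
  have hjunc : ∀ x ∈ (FreeGroup.invRev u.toWord).getLast?, ∀ y ∈ v.toWord.head?, NC x y := by
    intro x hx y hy
    have hgl : (FreeGroup.invRev u.toWord).getLast? = some (a.1, !a.2) := by
      rw [FreeGroup.invRev, List.getLast?_reverse, hta]
      simp
    rw [hgl] at hx
    rw [htb] at hy
    simp only [List.head?_cons, Option.mem_def, Option.some_inj] at hx hy
    subst hx; subst hy
    rintro ⟨h1, h2⟩
    apply h
    rw [hta, htb]
    simp only [List.head?_cons, Option.some_inj]
    apply Prod.ext
    · exact h1
    · simp only [Bool.not_not] at h2; exact h2.symm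
  have hchain : (FreeGroup.invRev u.toWord ++ v.toWord).Chain' NC :=
    List.isChain_append.mpr ⟨chain'_invRev (chain'_toWord u), chain'_toWord v, hjunc⟩
  rw [e1, norm_mk_of_chain' hchain, List.length_append, FreeGroup.invRev_length]
  rfl

lemma norm_eq_add_of_head_ne {m a b : FreeGroup α} (ha : m⁻¹ * a ≠ 1) (hb : m⁻¹ * b ≠ 1)
    (h : (m⁻¹ * a).toWord.head? ≠ (m⁻¹ * b).toWord.head?) :
    (a⁻¹ * b).norm = (m⁻¹ * a).norm + (m⁻¹ * b).norm := by
  have h2 := norm_inv_mul ha hb h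
  have e : (m⁻¹ * a)⁻¹ * (m⁻¹ * b) = a⁻¹ * b := by group
  rwa [e] at h2

lemma exists_mid (z : FreeGroup α) {k : ℕ} (h1 : 1 ≤ k) (h2 : k < z.norm) :
    ∃ m : FreeGroup α, (m⁻¹).norm = k ∧ (m⁻¹ * z).norm = z.norm - k ∧
      (m⁻¹).toWord.head? ≠ (m⁻¹ * z).toWord.head? := by
  set w := z.toWord with hwdef
  have hw : w.Chain' NC := chain'_toWord z
  have hlen : w.length = z.norm := rfl
  have hk1' : k - 1 < w.length := by omega
  have hk' : k < w.length := by omega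
  have hsplit : (FreeGroup.mk (w.take k))⁻¹ * z = FreeGroup.mk (w.drop k) := by
    have hh : FreeGroup.mk (w.take k) * FreeGroup.mk (w.drop k) = z := by
      rw [FreeGroup.mul_mk, List.take_append_drop, hwdef, FreeGroup.mk_toWord]
    rw [← hh, inv_mul_cancel_left]
  refine ⟨FreeGroup.mk (w.take k), ?_, ?_, ?_⟩
  · rw [FreeGroup.inv_mk, norm_mk_of_chain' (chain'_invRev (hw.take k)),
      FreeGroup.invRev_length, List.length_take]
    omega
  · rw [hsplit, norm_mk_of_chain' (hw.drop k), List.length_drop, hlen]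
  · have hW1 : ((FreeGroup.mk (w.take k))⁻¹).toWord.head? =
        some ((w[k-1]'hk1').1, !(w[k-1]'hk1').2) := by
      rw [FreeGroup.inv_mk, toWord_mk_of_chain' (chain'_invRev (hw.take k)),
        FreeGroup.invRev, List.head?_reverse, List.getLast?_map]
      have hgl : (w.take k).getLast? = some (w[k-1]'hk1') := by
        rw [List.getLast?_eq_getElem?]
        have hl : (w.take k).length = k := by rw [List.length_take]; omega
        rw [hl, List.getElem?_take_of_lt (by omega), List.getElem?_eq_getElem (by omega)]
      rw [hgl]
      rfl
    have hW2 : ((FreeGroup.mk (w.take k))⁻¹ * z).toWord.head? = some (w[k]'hk') := by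
      rw [hsplit, toWord_mk_of_chain' (hw.drop k), List.head?_drop,
        List.getElem?_eq_getElem hk']
    rw [hW1, hW2]
    intro hcontra
    simp only [Option.some_inj] at hcontra
    have hch := List.isChain_iff_getElem.mp hw (k-1) (by omega)
    have hidx : k - 1 + 1 = k := by omega
    simp only [hidx] at hch
    exact hch ⟨by rw [← hcontra], by rw [← hcontra]⟩

lemma finite_normBall [Finite α] (n : ℕ) : {z : FreeGroup α | z.norm ≤ n}.Finite := by
  have hsub : {z : FreeGroup α | z.norm ≤ n} ⊆ FreeGroup.toWord ⁻¹' {l | l.length ≤ n} :=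
    fun z h => h
  exact (Set.Finite.preimage FreeGroup.toWord_injective.injOn
    (List.finite_length_le (α × Bool) n)).subset hsub

end FreeGroupAux


namespace FreeGroupAux

lemma finite_of_fg {β : Type*} (h : Group.FG (FreeGroup β)) : Finite β := by
  classical
  obtain ⟨T, hT, hTfin⟩ := Group.fg_iff.mp h
  let φ : FreeGroup β →* Multiplicative (β →₀ ℤ) :=
    FreeGroup.lift fun b => Multiplicative.ofAdd (Finsupp.single b 1)
  let σ : Set β := ⋃ x ∈ T, ((φ x).toAdd.support : Set β)
  have hσ : σ.Finite := hTfin.biUnion fun x _ => (Finset.finite_toSet _)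
  let Q : Subgroup (Multiplicative (β →₀ ℤ)) :=
    { carrier := {f | ((Multiplicative.toAdd f).support : Set β) ⊆ σ}
      one_mem' := by simp
      mul_mem' := by
        intro f g hf hg
        refine Set.Subset.trans ?_ (Set.union_subset hf hg)
        intro b hb
        have : (Multiplicative.toAdd (f * g)).support ⊆
            (Multiplicative.toAdd f).support ∪ (Multiplicative.toAdd g).support :=
          Finsupp.support_add
        simpa using this hb
      inv_mem' := by
        intro f hf
        intro b hb
        apply hf
        simpa using hb }
  have hle : Subgroup.closure T ≤ Q.comap φ := by
    rw [Subgroup.closure_le]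
    intro x hx
    show ((Multiplicative.toAdd (φ x)).support : Set β) ⊆ σ
    exact Set.subset_biUnion_of_mem (u := fun x => ((Multiplicative.toAdd (φ x)).support : Set β)) hx
  have hall : ∀ b : β, b ∈ σ := by
    intro b
    have hmem : FreeGroup.of b ∈ Subgroup.closure T := by rw [hT]; trivial
    have hQ : φ (FreeGroup.of b) ∈ Q := hle hmem
    have hφ : φ (FreeGroup.of b) = Multiplicative.ofAdd (Finsupp.single b 1) :=
      FreeGroup.lift_apply_of
    have hsupp : ((Multiplicative.toAdd (φ (FreeGroup.of b))).support : Set β) ⊆ σ := hQ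
    apply hsupp
    rw [hφ]
    simp [Finsupp.support_single_ne_zero b (one_ne_zero)]
  exact Set.finite_univ_iff.mp (hσ.subset fun b _ => hall b)

lemma head_eq_getLast_of_chain' {γ δ : Type*} (f : γ → δ) (R : γ → γ → Prop) :
    ∀ (l : List γ) (hl : l ≠ []), l.Chain' R → (∀ a ∈ l, ∀ b ∈ l, R a b → f a = f b) →
      f (l.head hl) = f (l.getLast hl)
  | [], hl, _, _ => absurd rfl hl
  | [a], _, _, _ => by simp
  | a :: b :: t, _, hch, hrel => by
    have h1 : R a b := (List.isChain_cons_cons.mp hch).1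
    have h2 : (b :: t).Chain' R := (List.isChain_cons_cons.mp hch).2
    have hab : f a = f b := hrel a (by simp) b (by simp) h1
    have hrec := head_eq_getLast_of_chain' f R (b :: t) (by simp) h2
      (fun x hx y hy hxy => hrel x (List.mem_cons_of_mem a hx) y (List.mem_cons_of_mem a hy) hxy)
    rw [List.getLast_cons (by simp)]
    simpa [hab] using hrec

end FreeGroupAux




/-- A finite symmetric generating set for a group, inducing the word metric. -/
structure GenSet (G : Type*) [Group G] where
  carrier : Finset G
  symm : ∀ a ∈ carrier, a⁻¹ ∈ carrier
  gen : Subgroup.closure (carrier : Set G) = ⊤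

namespace GenSet

variable {G : Type*} [Group G] (S : GenSet G)

/-- Adjacency in the Cayley graph. -/
def adj (g h : G) : Prop := g⁻¹ * h ∈ S.carrier

/-- The word metric: the least length of a word in the generators carrying `g` to `h`. -/
noncomputable def dist (g h : G) : ℕ :=
  sInf {n | ∃ w : List G, (∀ a ∈ w, a ∈ S.carrier) ∧ w.length = n ∧ g * w.prod = h}

/-- The ball of radius `r` about `c` in the word metric. -/
def ball (c : G) (r : ℕ) : Set G := {g | S.dist c g ≤ r}

/-- `C` separates `A` from `B` if every path (finite sequence of points, each at distance
one from its successor) from `A` to `B` meets `C`. -/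
def Separates (C A B : Set G) : Prop :=
  ∀ (l : List G) (hl : l ≠ []), l.Chain' S.adj → l.head hl ∈ A → l.getLast hl ∈ B →
    ∃ x ∈ l, x ∈ C

/-- A group is narrow if there is an integer `i` such that every ball is separated from all
but finitely many balls of the same radius by a set of size at most `i`. -/
def Narrow : Prop :=
  ∃ i : ℕ, ∀ (r : ℕ) (c : G),
    {c' : G | ¬ ∃ C : Finset G, C.card ≤ i ∧
      S.Separates (↑C) (S.ball c r) (S.ball c' r)}.Finite

/-- Two points are connected within `A` if some path inside `A` joins them. -/
def ConnIn (A : Set G) (g h : G) : Prop :=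
  ∃ (l : List G) (hl : l ≠ []), l.Chain' S.adj ∧ (∀ x ∈ l, x ∈ A) ∧
    l.head hl = g ∧ l.getLast hl = h

/-- The connected component of `g` inside the set `A`. -/
def comp (A : Set G) (g : G) : Set G := {h | S.ConnIn A g h}

/-- A group is one-ended if for every radius `r` the complement of the ball of radius `r`
about the identity has exactly one infinite connected component. -/
def OneEnded : Prop :=
  ∀ r : ℕ, ∃ g ∈ (S.ball 1 r)ᶜ, (S.comp (S.ball 1 r)ᶜ g).Infinite ∧
    ∀ h ∈ (S.ball 1 r)ᶜ, (S.comp (S.ball 1 r)ᶜ h).Infinite →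
      S.comp (S.ball 1 r)ᶜ h = S.comp (S.ball 1 r)ᶜ g

end GenSet

/-- A group is virtually free if it has a free subgroup of finite index. -/
def VirtuallyFree (G : Type*) [Group G] : Prop :=
  ∃ H : Subgroup G, H.FiniteIndex ∧ IsFreeGroup H

/-- A group is virtually cyclic if it has a cyclic subgroup of finite index. -/
def VirtuallyCyclic (G : Type*) [Group G] : Prop :=
  ∃ H : Subgroup G, H.FiniteIndex ∧ IsCyclic H

/-- A (finitely generable) group is one-ended if it is so with respect to some
(equivalently, any) word metric. -/
def OneEndedGroup (G : Type*) [Group G] : Prop := ∃ S : GenSet G, S.OneEnded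

namespace GenSet

variable {G : Type*} [Group G] (S : GenSet G)

lemma exists_word (x : G) : ∃ w : List G, (∀ a ∈ w, a ∈ S.carrier) ∧ w.prod = x := by
  let P : Subgroup G :=
    { carrier := {x | ∃ w : List G, (∀ a ∈ w, a ∈ S.carrier) ∧ w.prod = x}
      one_mem' := ⟨[], by simp, rfl⟩
      mul_mem' := by
        rintro x y ⟨w1, h1, e1⟩ ⟨w2, h2, e2⟩
        refine ⟨w1 ++ w2, ?_, by rw [List.prod_append, e1, e2]⟩
        intro a ha
        rcases List.mem_append.mp ha with h | h
        exacts [h1 a h, h2 a h]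
      inv_mem' := by
        rintro x ⟨w, hw, e⟩
        refine ⟨(w.map fun a => a⁻¹).reverse, ?_, ?_⟩
        · intro a ha
          simp only [List.mem_reverse, List.mem_map] at ha
          obtain ⟨b, hb, rfl⟩ := ha
          exact S.symm b (hw b hb)
        · rw [← List.prod_inv_reverse, e] }
  have hle : Subgroup.closure (S.carrier : Set G) ≤ P := by
    rw [Subgroup.closure_le]
    intro a ha
    exact ⟨[a], by simpa using ha, by simp⟩
  exact hle (by rw [S.gen]; trivial)

lemma dist_spec (g h : G) : ∃ w : List G,
    (∀ a ∈ w, a ∈ S.carrier) ∧ w.length = S.dist g h ∧ g * w.prod = h := by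
  have hne : {n | ∃ w : List G, (∀ a ∈ w, a ∈ S.carrier) ∧ w.length = n ∧
      g * w.prod = h}.Nonempty := by
    obtain ⟨w, hw, hp⟩ := S.exists_word (g⁻¹ * h)
    exact ⟨w.length, w, hw, rfl, by rw [hp, mul_inv_cancel_left]⟩
  unfold GenSet.dist
  exact Nat.sInf_mem hne

end GenSet

/-- A finitely generated group which is wide (not narrow) is not virtually free;
equivalently, every finitely generated virtually free group is narrow. -/
theorem not_virtuallyFree_of_wide {G : Type*} [Group G] (S : GenSet G)
    (hwide : ¬ S.Narrow) : ¬ VirtuallyFree G := by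
  rintro ⟨H, hfi, hfree⟩
  apply hwide
  classical
  haveI := hfi
  haveI := hfree
  haveI hfg : Group.FG G := Group.fg_iff.mpr ⟨(S.carrier : Set G), S.gen, S.carrier.finite_toSet⟩
  haveI : Group.FG ↥H := inferInstance
  set B := IsFreeGroup.Generators ↥H with hB
  haveI : DecidableEq B := Classical.decEq _
  set e : ↥H ≃* FreeGroup B := IsFreeGroup.toFreeGroup ↥H with he
  haveI hfinB : Finite B :=
    FreeGroupAux.finite_of_fg (Group.fg_of_surjective (f := e.toMonoidHom) e.surjective)
  -- transversal for right cosets of H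
  haveI : Finite (G ⧸ H) := inferInstance
  haveI hQfin : Finite (Quotient (QuotientGroup.rightRel H)) :=
    Finite.of_equiv _ (QuotientGroup.quotientRightRelEquivQuotientLeftRel H).symm
  set τ : G → G := fun g => (Quotient.mk (QuotientGroup.rightRel H) g).out with hτ
  have hτH : ∀ g : G, g * (τ g)⁻¹ ∈ H := by
    intro g
    have h0 : Quotient.mk (QuotientGroup.rightRel H)
        ((Quotient.mk (QuotientGroup.rightRel H) g).out) =
        Quotient.mk (QuotientGroup.rightRel H) g := Quotient.out_eq _
    have h1 := Quotient.exact h0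
    exact QuotientGroup.rightRel_apply.mp h1
  have hTfin : (Set.range τ).Finite := by
    have hsub : Set.range τ ⊆
        Set.range (fun q : Quotient (QuotientGroup.rightRel H) => q.out) := by
      rintro x ⟨g, rfl⟩; exact ⟨_, rfl⟩
    exact (Set.finite_range _).subset hsub
  set T : Finset G := hTfin.toFinset with hT
  have hτT : ∀ g, τ g ∈ T := fun g => hTfin.mem_toFinset.mpr ⟨g, rfl⟩
  set π : G → ↥H := fun g => ⟨g * (τ g)⁻¹, hτH g⟩ with hπ
  set ψ : G → FreeGroup B := fun g => e (π g) with hψ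
  have hfiber : ∀ g : G, ((e.symm (ψ g) : ↥H) : G) * τ g = g := by
    intro g
    show ((e.symm (e (π g)) : ↥H) : G) * τ g = g
    rw [MulEquiv.symm_apply_apply]
    show g * (τ g)⁻¹ * τ g = g
    rw [inv_mul_cancel_right]
  -- the Lipschitz constant
  have hDfin : {h : ↥H | ∃ t ∈ T, ∃ s ∈ S.carrier, ∃ t' ∈ T, (h : G) = t * s * t'⁻¹}.Finite := by
    apply Set.Finite.of_finite_image (f := fun h : ↥H => (h : G))
    · apply Set.Finite.subset ((T.finite_toSet.prod
        (S.carrier.finite_toSet.prod T.finite_toSet)).image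
        (fun p : G × G × G => p.1 * p.2.1 * p.2.2⁻¹))
      rintro x ⟨h, ⟨t, ht, s, hs, t', ht', hx⟩, rfl⟩
      exact ⟨(t, s, t'), ⟨ht, hs, ht'⟩, hx.symm⟩
    · exact Subtype.val_injective.injOn
  set lam : ℕ := hDfin.toFinset.sup (fun h => (e h).norm) with hlam
  have hstep : ∀ g g' : G, S.adj g g' → ((ψ g)⁻¹ * ψ g').norm ≤ lam := by
    intro g g' ha
    have hkey : (ψ g)⁻¹ * ψ g' = e ((π g)⁻¹ * π g') := by
      show (e (π g))⁻¹ * e (π g') = _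
      rw [map_mul, map_inv]
    have hmem : (π g)⁻¹ * π g' ∈
        {h : ↥H | ∃ t ∈ T, ∃ s ∈ S.carrier, ∃ t' ∈ T, (h : G) = t * s * t'⁻¹} := by
      refine ⟨τ g, hτT g, g⁻¹ * g', ha, τ g', hτT g', ?_⟩
      show (g * (τ g)⁻¹)⁻¹ * (g' * (τ g')⁻¹) = τ g * (g⁻¹ * g') * (τ g')⁻¹
      group
    rw [hkey, hlam]
    exact Finset.le_sup (f := fun h : ↥H => (e h).norm) (hDfin.mem_toFinset.mpr hmem)
  -- coarse Lipschitz bound along words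
  have Lone : ∀ (w : List G), (∀ a ∈ w, a ∈ S.carrier) → ∀ g : G,
      ((ψ g)⁻¹ * ψ (g * w.prod)).norm ≤ lam * w.length := by
    intro w
    induction w with
    | nil => intro _ g; simp
    | cons a t ih =>
      intro hmem g
      have h1 : S.adj g (g * a) := by
        show g⁻¹ * (g * a) ∈ S.carrier
        rw [inv_mul_cancel_left]
        exact hmem a List.mem_cons_self
      have h2 := ih (fun x hx => hmem x (List.mem_cons_of_mem a hx)) (g * a)
      have e1 : (ψ g)⁻¹ * ψ (g * (a :: t).prod) =
          ((ψ g)⁻¹ * ψ (g * a)) * ((ψ (g * a))⁻¹ * ψ (g * a * t.prod)) := by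
        rw [List.prod_cons, ← mul_assoc]
        group
      calc ((ψ g)⁻¹ * ψ (g * (a :: t).prod)).norm
          ≤ ((ψ g)⁻¹ * ψ (g * a)).norm + ((ψ (g * a))⁻¹ * ψ (g * a * t.prod)).norm := by
            rw [e1]; exact FreeGroup.norm_mul_le _ _
        _ ≤ lam + lam * t.length := add_le_add (hstep _ _ h1) h2
        _ = lam * (a :: t).length := by rw [List.length_cons]; ring
  have hdistb : ∀ c g : G, ((ψ c)⁻¹ * ψ g).norm ≤ lam * S.dist c g := by
    intro c g
    obtain ⟨w, hw, hlen, hprod⟩ := S.dist_spec c g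
    have h0 := Lone w hw c
    rw [hprod, hlen] at h0
    exact h0
  have hballF : ∀ n : ℕ, {z : FreeGroup B | z.norm ≤ n}.Finite :=
    fun n => FreeGroupAux.finite_normBall n
  set ballF : Finset (FreeGroup B) := (hballF lam).toFinset with hballFdef
  refine ⟨ballF.card * T.card, fun r c => ?_⟩
  set M : ℕ := 2 * (lam * r + lam) + 1 with hM
  have hYfin : {c' : G | ((ψ c)⁻¹ * ψ c').norm ≤ M}.Finite := by
    have h1 : {z : FreeGroup B | ((ψ c)⁻¹ * z).norm ≤ M}.Finite := by
      have heq : {z : FreeGroup B | ((ψ c)⁻¹ * z).norm ≤ M} =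
          (fun z => (ψ c)⁻¹ * z) ⁻¹' {z | z.norm ≤ M} := rfl
      rw [heq]
      exact Set.Finite.preimage (Set.injOn_of_injective (mul_right_injective _)) (hballF M)
    have h2 : {c' : G | ((ψ c)⁻¹ * ψ c').norm ≤ M} ⊆
        (fun p : FreeGroup B × G => ((e.symm p.1 : ↥H) : G) * p.2) ''
          ({z : FreeGroup B | ((ψ c)⁻¹ * z).norm ≤ M} ×ˢ Set.range τ) := by
      intro c' hc'
      exact ⟨(ψ c', τ c'), ⟨hc', ⟨c', rfl⟩⟩, hfiber c'⟩
    exact ((h1.prod hTfin).image _).subset h2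
  apply hYfin.subset
  intro c' hc'
  by_contra hfar
  simp only [Set.mem_setOf_eq, not_le] at hfar
  apply hc'
  clear hc'
  set z : FreeGroup B := (ψ c)⁻¹ * ψ c' with hz
  set k : ℕ := lam * r + lam + 1 with hk
  have hk2 : k < z.norm := by omega
  obtain ⟨m0, hm1, hm2, hm3⟩ := FreeGroupAux.exists_mid z (by omega) hk2
  set mG : FreeGroup B := ψ c * m0 with hmG
  have idc : mG⁻¹ * ψ c = m0⁻¹ := by rw [hmG]; group
  have idc' : mG⁻¹ * ψ c' = m0⁻¹ * z := by rw [hmG, hz]; group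
  refine ⟨Finset.image (fun p : FreeGroup B × G =>
    ((e.symm (mG * p.1) : ↥H) : G) * p.2) (ballF ×ˢ T), ?_, ?_⟩
  · calc (Finset.image _ (ballF ×ˢ T)).card ≤ (ballF ×ˢ T).card := Finset.card_image_le
      _ = ballF.card * T.card := Finset.card_product _ _
  · intro l hl hchain hhead hlast
    by_contra hnoC
    push_neg at hnoC
    have havoid : ∀ x ∈ l, lam < (mG⁻¹ * ψ x).norm := by
      intro x hx
      by_contra hle
      push_neg at hle
      refine hnoC x hx (Finset.mem_coe.mpr ?_)
      refine Finset.mem_image.mpr ⟨(mG⁻¹ * ψ x, τ x), Finset.mem_product.mpr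
        ⟨(hballF lam).mem_toFinset.mpr hle, hτT x⟩, ?_⟩
      show ((e.symm (mG * (mG⁻¹ * ψ x)) : ↥H) : G) * τ x = x
      rw [mul_inv_cancel_left]
      exact hfiber x
    have hne1 : ∀ x ∈ l, mG⁻¹ * ψ x ≠ 1 := by
      intro x hx h1
      have h2 := havoid x hx
      rw [h1] at h2
      simp at h2
    have crit : ∀ x y : G, mG⁻¹ * ψ x ≠ 1 → mG⁻¹ * ψ y ≠ 1 →
        (mG⁻¹ * ψ x).toWord.head? ≠ (mG⁻¹ * ψ y).toWord.head? →
        ((ψ x)⁻¹ * ψ y).norm = (mG⁻¹ * ψ x).norm + (mG⁻¹ * ψ y).norm :=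
      fun x y hx hy hne => FreeGroupAux.norm_eq_add_of_head_ne hx hy hne
    have hnc : (mG⁻¹ * ψ c).norm = k := by rw [idc]; exact hm1
    have hnc' : (mG⁻¹ * ψ c').norm = z.norm - k := by rw [idc']; exact hm2
    have hc1 : mG⁻¹ * ψ c ≠ 1 := by
      intro h1; rw [h1] at hnc; simp at hnc
    have hc'1 : mG⁻¹ * ψ c' ≠ 1 := by
      intro h1; rw [h1] at hnc'; simp at hnc'; omega
    have hsides : ∀ a ∈ l, ∀ b ∈ l, S.adj a b →
        (mG⁻¹ * ψ a).toWord.head? = (mG⁻¹ * ψ b).toWord.head? := by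
      intro a ha b hb hadj
      by_contra hne
      have h1 := crit a b (hne1 a ha) (hne1 b hb) hne
      have h2 := hstep a b hadj
      have h3 := havoid a ha
      have h4 := havoid b hb
      omega
    have hconst := FreeGroupAux.head_eq_getLast_of_chain'
      (fun x => (mG⁻¹ * ψ x).toWord.head?) S.adj l hl hchain hsides
    have hheadside : (mG⁻¹ * ψ (l.head hl)).toWord.head? = (mG⁻¹ * ψ c).toWord.head? := by
      by_contra hne
      have h1 := crit _ c (hne1 _ (List.head_mem hl)) hc1 hne
      have h2 : ((ψ (l.head hl))⁻¹ * ψ c).norm ≤ lam * r := by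
        have h3 := hdistb c (l.head hl)
        have h4 : S.dist c (l.head hl) ≤ r := hhead
        have h5 : ((ψ (l.head hl))⁻¹ * ψ c).norm = ((ψ c)⁻¹ * ψ (l.head hl)).norm := by
          rw [show (ψ (l.head hl))⁻¹ * ψ c = ((ψ c)⁻¹ * ψ (l.head hl))⁻¹ by group,
            FreeGroup.norm_inv_eq]
        calc ((ψ (l.head hl))⁻¹ * ψ c).norm = ((ψ c)⁻¹ * ψ (l.head hl)).norm := h5
          _ ≤ lam * S.dist c (l.head hl) := h3
          _ ≤ lam * r := Nat.mul_le_mul_left lam h4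
      have h6 := havoid _ (List.head_mem hl)
      omega
    have hlastside : (mG⁻¹ * ψ (l.getLast hl)).toWord.head? =
        (mG⁻¹ * ψ c').toWord.head? := by
      by_contra hne
      have h1 := crit _ c' (hne1 _ (List.getLast_mem hl)) hc'1 hne
      have h2 : ((ψ (l.getLast hl))⁻¹ * ψ c').norm ≤ lam * r := by
        have h3 := hdistb c' (l.getLast hl)
        have h4 : S.dist c' (l.getLast hl) ≤ r := hlast
        have h5 : ((ψ (l.getLast hl))⁻¹ * ψ c').norm =
            ((ψ c')⁻¹ * ψ (l.getLast hl)).norm := by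
          rw [show (ψ (l.getLast hl))⁻¹ * ψ c' = ((ψ c')⁻¹ * ψ (l.getLast hl))⁻¹ by group,
            FreeGroup.norm_inv_eq]
        calc ((ψ (l.getLast hl))⁻¹ * ψ c').norm = ((ψ c')⁻¹ * ψ (l.getLast hl)).norm := h5
          _ ≤ lam * S.dist c' (l.getLast hl) := h3
          _ ≤ lam * r := Nat.mul_le_mul_left lam h4
      have h6 := havoid _ (List.getLast_mem hl)
      omega
    apply hm3
    calc (m0⁻¹).toWord.head? = (mG⁻¹ * ψ c).toWord.head? := by rw [idc]
      _ = (mG⁻¹ * ψ (l.head hl)).toWord.head? := hheadside.symm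
      _ = (mG⁻¹ * ψ (l.getLast hl)).toWord.head? := hconst
      _ = (mG⁻¹ * ψ c').toWord.head? := hlastside
      _ = (m0⁻¹ * z).toWord.head? := by rw [idc']
end

section
/- If a finitely generated group G contains a one-ended finitely generated subgroup H, then G is wide. -/
namespace GenSet

open List

variable {Γ : Type*} [Group Γ] (U : GenSet Γ)

/-- `w` is a word over the generating set. -/
def IsWord (w : List Γ) : Prop := ∀ a ∈ w, a ∈ U.carrier

variable {U}

lemma isWord_nil : U.IsWord [] := by intro a ha; cases ha

lemma IsWord.append {w v : List Γ} (hw : U.IsWord w) (hv : U.IsWord v) :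
    U.IsWord (w ++ v) := by
  intro a ha; rcases List.mem_append.1 ha with h | h
  · exact hw a h
  · exact hv a h

variable (U)

lemma exists_word_s5 (x : Γ) : ∃ w : List Γ, U.IsWord w ∧ w.prod = x := by
  have hx : x ∈ Subgroup.closure (U.carrier : Set Γ) := by
    rw [U.gen]; trivial
  induction hx using Subgroup.closure_induction with
  | mem a ha =>
      refine ⟨[a], ?_, by simp⟩
      intro b hb
      simp only [List.mem_singleton] at hb
      subst hb; exact ha
  | one => exact ⟨[], isWord_nil, by simp⟩
  | mul a b _ _ iha ihb =>
      obtain ⟨w, hw, hwp⟩ := iha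
      obtain ⟨v, hv, hvp⟩ := ihb
      exact ⟨w ++ v, hw.append hv, by simp [hwp, hvp]⟩
  | inv a _ ih =>
      obtain ⟨w, hw, hwp⟩ := ih
      refine ⟨(w.map (·⁻¹)).reverse, ?_, ?_⟩
      · intro b hb
        simp only [List.mem_reverse, List.mem_map] at hb
        obtain ⟨c, hc, rfl⟩ := hb
        exact U.symm c (hw c hc)
      · rw [List.prod_reverse_noncomm]
        simp [← hwp]

lemma distSet_nonempty (g h : Γ) :
    {n | ∃ w : List Γ, (∀ a ∈ w, a ∈ U.carrier) ∧ w.length = n ∧ g * w.prod = h}.Nonempty := by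
  obtain ⟨w, hw, hwp⟩ := U.exists_word_s5 (g⁻¹ * h)
  exact ⟨w.length, w, hw, rfl, by rw [hwp]; group⟩

lemma dist_exists_word (g h : Γ) :
    ∃ w : List Γ, U.IsWord w ∧ w.length = U.dist g h ∧ g * w.prod = h := by
  have := Nat.sInf_mem (U.distSet_nonempty g h)
  obtain ⟨w, hw, hl, hp⟩ := this
  exact ⟨w, hw, hl, hp⟩

lemma dist_le_word {g h : Γ} {w : List Γ} (hw : U.IsWord w) (hp : g * w.prod = h) :
    U.dist g h ≤ w.length :=
  Nat.sInf_le ⟨w, hw, rfl, hp⟩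

@[simp] lemma dist_self (g : Γ) : U.dist g g = 0 :=
  Nat.le_zero.1 <| by simpa using U.dist_le_word (w := []) isWord_nil (by simp)

lemma dist_triangle (a b c : Γ) : U.dist a c ≤ U.dist a b + U.dist b c := by
  obtain ⟨w, hw, hwl, hwp⟩ := U.dist_exists_word a b
  obtain ⟨v, hv, hvl, hvp⟩ := U.dist_exists_word b c
  have : a * (w ++ v).prod = c := by
    rw [List.prod_append, ← mul_assoc, hwp, hvp]
  simpa [hwl, hvl] using U.dist_le_word (hw.append hv) this

lemma dist_mul_left (a g h : Γ) : U.dist (a * g) (a * h) = U.dist g h := by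
  unfold dist
  congr 1
  ext n
  constructor
  · rintro ⟨w, hw, hl, hp⟩
    refine ⟨w, hw, hl, ?_⟩
    have := hp
    rw [mul_assoc] at this
    exact mul_left_cancel this
  · rintro ⟨w, hw, hl, hp⟩
    exact ⟨w, hw, hl, by rw [mul_assoc, hp]⟩

lemma eq_of_dist_eq_zero {g h : Γ} (h0 : U.dist g h = 0) : g = h := by
  obtain ⟨w, _, hl, hp⟩ := U.dist_exists_word g h
  rw [h0, List.length_eq_zero_iff] at hl
  subst hl; simpa using hp

lemma adj_of_word_step {g : Γ} {a : Γ} (ha : a ∈ U.carrier) : U.adj g (g * a) := by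
  unfold adj; group; exact ha

lemma dist_le_one_of_adj {g h : Γ} (h1 : U.adj g h) : U.dist g h ≤ 1 := by
  have hp : g * [g⁻¹ * h].prod = h := by simp
  have hw : U.IsWord [g⁻¹ * h] := by
    intro b hb
    simp only [List.mem_singleton] at hb
    subst hb; exact h1
  simpa using U.dist_le_word hw hp

lemma adj_symm {g h : Γ} (h1 : U.adj g h) : U.adj h g := by
  unfold adj at h1 ⊢
  simpa using U.symm _ h1

lemma adj_mul_left {g h : Γ} (a : Γ) (h1 : U.adj g h) : U.adj (a * g) (a * h) := by
  unfold adj at h1 ⊢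
  have : (a * g)⁻¹ * (a * h) = g⁻¹ * h := by group
  rw [this]; exact h1

end GenSet
namespace GenSet

open List

variable {Γ : Type*} [Group Γ] {U : GenSet Γ}

lemma ball_zero_subset (c : Γ) : U.ball c 0 ⊆ {c} := by
  intro g hg
  have : U.dist c g = 0 := Nat.le_zero.1 hg
  have := U.eq_of_dist_eq_zero this
  simp [this.symm]

lemma ball_finite (c : Γ) (r : ℕ) : (U.ball c r).Finite := by
  induction r with
  | zero => exact (Set.finite_singleton c).subset (ball_zero_subset c)
  | succ r ih =>
      have hsub : U.ball c (r+1) ⊆ U.ball c r ∪ ⋃ a ∈ (U.carrier : Set Γ), (fun x => x * a) '' U.ball c r := by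
        intro x hx
        obtain ⟨w, hw, hwl, hwp⟩ := U.dist_exists_word c x
        by_cases hlen : w.length ≤ r
        · left
          calc U.dist c x ≤ w.length := U.dist_le_word hw hwp
            _ ≤ r := hlen
        · right
          rcases List.eq_nil_or_concat w with rfl | ⟨v, a, rfl⟩
          · simp at hlen
          · have hv : U.IsWord v := fun b hb => hw b (by simp [List.concat_eq_append, hb])
            have ha : a ∈ U.carrier := hw a (by simp [List.concat_eq_append])
            have hxa : x = (c * v.prod) * a := by
              rw [← hwp]; simp [List.concat_eq_append, mul_assoc]
            have hdv : U.dist c (c * v.prod) ≤ r := by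
              have h1 := U.dist_le_word hv (rfl : c * v.prod = c * v.prod)
              have h2 : v.length + 1 = U.dist c x := by
                rw [← hwl]; simp [List.concat_eq_append]
              have h3 : U.dist c x ≤ r + 1 := hx
              omega
            refine Set.mem_biUnion ha ⟨c * v.prod, hdv, hxa.symm⟩
      refine ((ih.union (Set.Finite.biUnion U.carrier.finite_toSet
        (fun a _ => ih.image _)))).subset hsub

/-! ### paths and components -/

lemma connIn_refl {A : Set Γ} {g : Γ} (hg : g ∈ A) : U.ConnIn A g g :=
  ⟨[g], by simp, List.isChain_singleton g, by simpa using hg, rfl, rfl⟩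

lemma ConnIn.mem_left {A : Set Γ} {g h : Γ} (hc : U.ConnIn A g h) : g ∈ A := by
  obtain ⟨l, hl, _, hmem, hhead, _⟩ := hc
  exact hhead ▸ hmem _ (List.head_mem hl)

lemma ConnIn.mem_right {A : Set Γ} {g h : Γ} (hc : U.ConnIn A g h) : h ∈ A := by
  obtain ⟨l, hl, _, hmem, _, hlast⟩ := hc
  exact hlast ▸ hmem _ (List.getLast_mem hl)

lemma ConnIn.cons {A : Set Γ} {g g' h : Γ} (hg : g ∈ A) (hadj : U.adj g g')
    (hc : U.ConnIn A g' h) : U.ConnIn A g h := by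
  obtain ⟨l, hl, hchain, hmem, hhead, hlast⟩ := hc
  refine ⟨g :: l, by simp, ?_, ?_, by simp, ?_⟩
  · show List.IsChain _ _; rw [List.isChain_cons]
    refine ⟨?_, hchain⟩
    intro y hy
    rw [List.head?_eq_head hl] at hy
    simp only [Option.mem_def, Option.some.injEq] at hy
    subst hy; rw [hhead] at *; exact hhead ▸ hadj
  · intro x hx
    rcases List.mem_cons.1 hx with rfl | hx
    · exact hg
    · exact hmem x hx
  · rw [List.getLast_cons hl]; exact hlast

lemma ConnIn.symm {A : Set Γ} {g h : Γ} (hc : U.ConnIn A g h) : U.ConnIn A h g := by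
  obtain ⟨l, hl, hchain, hmem, hhead, hlast⟩ := hc
  have hrl : l.reverse ≠ [] := by simpa using hl
  refine ⟨l.reverse, hrl, ?_, ?_, ?_, ?_⟩
  · show List.IsChain _ _; rw [List.isChain_reverse]
    exact hchain.imp (fun a b hab => U.adj_symm hab)
  · intro x hx; exact hmem x (by simpa using hx)
  · rw [List.head_reverse]; exact hlast
  · rw [List.getLast_reverse]; exact hhead

lemma ConnIn.trans {A : Set Γ} {g h k : Γ} (h1 : U.ConnIn A g h) (h2 : U.ConnIn A h k) :
    U.ConnIn A g k := by
  have h1' := h1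
  obtain ⟨l, hl, hchain, hmem, hhead, hlast⟩ := h1
  obtain ⟨m, hm, mchain, mmem, mhead, mlast⟩ := h2
  rcases m with _ | ⟨x, t⟩
  · exact absurd rfl hm
  rcases t with _ | ⟨y, t'⟩
  · -- m = [x], so h = k
    have : h = k := by
      simp only [List.head_cons] at mhead
      simp only [List.getLast_singleton] at mlast
      rw [← mhead, mlast]
    rw [← this]; exact h1'
  · -- m = x :: y :: t'
    have hx : x = h := by simpa using mhead
    have tchain : List.Chain' U.adj (y :: t') := (List.isChain_cons_cons.1 mchain).2
    have hadj : U.adj h y := by rw [← hx]; exact (List.isChain_cons_cons.1 mchain).1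
    have h2' : U.ConnIn A y k := by
      refine ⟨y :: t', by simp, tchain, ?_, by simp, ?_⟩
      · intro z hz; exact mmem z (List.mem_cons_of_mem _ hz)
      · rw [← mlast, List.getLast_cons (by simp : (y :: t') ≠ [])]
    -- now append l and (path of h2')
    obtain ⟨m', hm', m'chain, m'mem, m'head, m'last⟩ := h2'
    refine ⟨l ++ m', by simp [hl], ?_, ?_, ?_, ?_⟩
    · refine List.IsChain.append hchain m'chain ?_
      intro a ha b hb
      rw [List.getLast?_eq_getLast hl] at ha
      rw [List.head?_eq_head hm'] at hb
      simp only [Option.mem_def, Option.some.injEq] at ha hb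
      subst ha; subst hb
      rw [hlast, m'head]
      exact hadj
    · intro z hz
      rcases List.mem_append.1 hz with hz | hz
      · exact hmem z hz
      · exact m'mem z hz
    · rw [List.head_append_of_ne_nil hl]; exact hhead
    · rw [List.getLast_append_of_ne_nil _ hm']; exact m'last

lemma connIn_of_mem_path {A : Set Γ} {l : List Γ} (hl : l ≠ [])
    (hchain : List.Chain' U.adj l) (hmem : ∀ x ∈ l, x ∈ A) :
    ∀ x ∈ l, U.ConnIn A (l.head hl) x := by
  induction l with
  | nil => exact absurd rfl hl
  | cons g t ih =>
      intro x hx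
      rcases List.mem_cons.1 hx with rfl | hx
      · exact connIn_refl (hmem _ (by simp))
      · have ht : t ≠ [] := by rintro rfl; simp at hx
        have tchain : List.Chain' U.adj t := hchain.tail
        have tmem : ∀ z ∈ t, z ∈ A := fun z hz => hmem z (List.mem_cons_of_mem _ hz)
        have := ih ht tchain tmem x hx
        have hadj : U.adj x (t.head ht) → True := fun _ => trivial
        have hgadj : U.adj g (t.head ht) := by
          rcases t with _ | ⟨y, t'⟩
          · exact absurd rfl ht
          · exact (List.isChain_cons_cons.1 hchain).1
        simp only [List.head_cons]
        exact ConnIn.cons (hmem g (by simp)) hgadj this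

lemma mem_comp_self {A : Set Γ} {g : Γ} (hg : g ∈ A) : g ∈ U.comp A g :=
  connIn_refl hg

lemma comp_subset {A : Set Γ} (g : Γ) : U.comp A g ⊆ A := fun _ hx => hx.mem_right

lemma comp_eq_of_mem {A : Set Γ} {g h : Γ} (hh : h ∈ U.comp A g) :
    U.comp A g = U.comp A h := by
  ext x
  constructor
  · intro hx; exact (ConnIn.symm hh).trans hx
  · intro hx; exact ConnIn.trans hh hx

lemma comp_mono {A B : Set Γ} (hAB : A ⊆ B) (g : Γ) : U.comp A g ⊆ U.comp B g := by
  rintro x ⟨l, hl, hchain, hmem, hhead, hlast⟩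
  exact ⟨l, hl, hchain, fun z hz => hAB (hmem z hz), hhead, hlast⟩

lemma connIn_univ_of_word : ∀ (w : List Γ), U.IsWord w → ∀ x : Γ, U.ConnIn (Set.univ) x (x * w.prod) := by
  intro w
  induction w with
  | nil => intro _ x; simpa using connIn_refl (Set.mem_univ x)
  | cons a t ih =>
      intro hw x
      have ha : a ∈ U.carrier := hw a (by simp)
      have ht : U.IsWord t := fun b hb => hw b (List.mem_cons_of_mem _ hb)
      have hstep : U.adj x (x * a) := U.adj_of_word_step ha
      have := ih ht (x * a)
      rw [List.prod_cons, ← mul_assoc]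
      exact ConnIn.cons (Set.mem_univ x) hstep this

lemma exists_connIn_univ (x y : Γ) : U.ConnIn (Set.univ) x y := by
  obtain ⟨w, hw, hwp⟩ := U.exists_word_s5 (x⁻¹ * y)
  have hxy : x * w.prod = y := by rw [hwp]; group
  rw [← hxy]
  exact connIn_univ_of_word w hw x

end GenSet
namespace GenSet

open List

variable {Γ : Type*} [Group Γ] {U : GenSet Γ}

/-- First crossing of a path into a set `F`. -/
lemma first_cross {F : Set Γ} :
    ∀ (l : List Γ) (hl : l ≠ []), List.Chain' U.adj l → l.head hl ∉ F → l.getLast hl ∈ F →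
      ∃ a b, U.adj a b ∧ b ∈ F ∧ a ∉ F ∧ U.ConnIn Fᶜ (l.head hl) a := by
  intro l
  induction l with
  | nil => intro hl; exact absurd rfl hl
  | cons x t ih =>
      intro _ hchain hhead hlast
      simp only [List.head_cons] at hhead ⊢
      rcases t with _ | ⟨y, t'⟩
      · simp only [List.getLast_singleton] at hlast
        exact absurd hlast hhead
      · have hadj : U.adj x y := (List.isChain_cons_cons.1 hchain).1
        have tchain : List.Chain' U.adj (y :: t') := (List.isChain_cons_cons.1 hchain).2
        have hlast' : (y :: t').getLast (by simp) ∈ F := by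
          rw [List.getLast_cons (by simp : (y :: t') ≠ [])] at hlast
          exact hlast
        by_cases hy : y ∈ F
        · exact ⟨x, y, hadj, hy, hhead, connIn_refl hhead⟩
        · obtain ⟨a, b, hab, hbF, haF, hconn⟩ := ih (by simp) tchain (by simpa using hy) hlast'
          simp only [List.head_cons] at hconn
          exact ⟨a, b, hab, hbF, haF, ConnIn.cons hhead hadj hconn⟩

/-- If a path avoids `F` and crossing out of `P` forces hitting `F`, the path stays in `P`. -/
lemma stay_in {F P : Set Γ}
    (hcross : ∀ a b, U.adj a b → a ∈ P → b ∉ P → a ∈ F ∨ b ∈ F) :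
    ∀ (l : List Γ) (hl : l ≠ []), List.Chain' U.adj l → (∀ x ∈ l, x ∉ F) →
      l.head hl ∈ P → ∀ x ∈ l, x ∈ P := by
  intro l
  induction l with
  | nil => intro hl; exact absurd rfl hl
  | cons x t ih =>
      intro _ hchain hmem hhead z hz
      simp only [List.head_cons] at hhead
      rcases List.mem_cons.1 hz with rfl | hz
      · exact hhead
      · rcases t with _ | ⟨y, t'⟩
        · simp at hz
        · have hadj : U.adj x y := (List.isChain_cons_cons.1 hchain).1
          have tchain := (List.isChain_cons_cons.1 hchain).2
          have hy : y ∈ P := by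
            by_contra hyP
            rcases hcross x y hadj hhead hyP with h | h
            · exact hmem x (by simp) h
            · exact hmem y (by simp) h
          exact ih (by simp) tchain (fun w hw => hmem w (List.mem_cons_of_mem _ hw))
            (by simpa using hy) z hz

/-- Discrete intermediate value theorem along a path. -/
lemma path_ivt {w : Γ} :
    ∀ (l : List Γ) (hl : l ≠ []), List.Chain' U.adj l → ∀ j : ℕ,
      U.dist w (l.head hl) ≤ j → j ≤ U.dist w (l.getLast hl) → ∃ x ∈ l, U.dist w x = j := by
  intro l
  induction l with
  | nil => intro hl; exact absurd rfl hl
  | cons x t ih =>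
      intro _ hchain j hhead hlast
      simp only [List.head_cons] at hhead
      rcases t with _ | ⟨y, t'⟩
      · simp only [List.getLast_singleton] at hlast
        exact ⟨x, by simp, le_antisymm hhead hlast⟩
      · by_cases hx : U.dist w x = j
        · exact ⟨x, by simp, hx⟩
        · have hxlt : U.dist w x < j := lt_of_le_of_ne hhead hx
          have hadj : U.adj x y := (List.isChain_cons_cons.1 hchain).1
          have hy : U.dist w y ≤ j := by
            have h1 : U.dist w y ≤ U.dist w x + U.dist x y := U.dist_triangle _ _ _
            have h2 : U.dist x y ≤ 1 := U.dist_le_one_of_adj hadj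
            omega
          have hlast' : j ≤ U.dist w ((y :: t').getLast (by simp)) := by
            rw [List.getLast_cons (by simp : (y :: t') ≠ [])] at hlast
            exact hlast
          obtain ⟨z, hz, hzj⟩ := ih (by simp) (List.isChain_cons_cons.1 hchain).2 j (by simpa using hy) hlast'
          exact ⟨z, List.mem_cons_of_mem _ hz, hzj⟩

/-- The collection of connected components of the complement of a finite nonempty set is finite. -/
lemma comps_finite {F : Set Γ} (hF : F.Finite) (hFne : F.Nonempty) :
    {V : Set Γ | ∃ x, x ∉ F ∧ V = U.comp Fᶜ x}.Finite := by
  classical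
  set N : Set Γ := {a | a ∉ F ∧ ∃ f ∈ F, U.adj a f} with hN
  have hNfin : N.Finite := by
    have : N ⊆ ⋃ f ∈ F, (fun s => f * s⁻¹) '' (U.carrier : Set Γ) := by
      rintro a ⟨haF, f, hf, hadj⟩
      refine Set.mem_biUnion hf ⟨a⁻¹ * f, hadj, ?_⟩
      group
    exact (hF.biUnion (fun f _ => U.carrier.finite_toSet.image _)).subset this
  have key : ∀ V ∈ {V : Set Γ | ∃ x, x ∉ F ∧ V = U.comp Fᶜ x}, (V ∩ N).Nonempty := by
    rintro V ⟨x, hx, rfl⟩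
    obtain ⟨f₀, hf₀⟩ := hFne
    obtain ⟨l, hl, hchain, _, hhead, hlast⟩ := exists_connIn_univ (U := U) x f₀
    obtain ⟨a, b, hab, hbF, haF, hconn⟩ := first_cross l hl hchain (by rw [hhead]; exact hx)
      (by rw [hlast]; exact hf₀)
    rw [hhead] at hconn
    exact ⟨a, hconn, haF, b, hbF, hab⟩
  choose φ hφ using key
  haveI := hNfin.to_subtype
  have hinj : Function.Injective
      (fun p : {V // V ∈ {V : Set Γ | ∃ x, x ∉ F ∧ V = U.comp Fᶜ x}} =>
        (⟨φ p.1 p.2, (hφ p.1 p.2).2⟩ : N)) := by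
    rintro ⟨V, hV⟩ ⟨V', hV'⟩ h
    simp only [Subtype.mk.injEq] at h
    have hV2 := hV
    have hV'2 := hV'
    obtain ⟨x, hx, rfl⟩ := hV2
    obtain ⟨x', hx', rfl⟩ := hV'2
    have h1 := (hφ _ hV).1
    have h2 := (hφ _ hV').1
    rw [h] at h1
    have e1 : U.comp Fᶜ x = U.comp Fᶜ (φ _ hV') := comp_eq_of_mem h1
    have e2 : U.comp Fᶜ x' = U.comp Fᶜ (φ _ hV') := comp_eq_of_mem h2
    simp only [Subtype.mk.injEq]
    rw [e1]; exact e2.symm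
  have : Finite {V // V ∈ {V : Set Γ | ∃ x, x ∉ F ∧ V = U.comp Fᶜ x}} :=
    Finite.of_injective _ hinj
  exact Set.finite_coe_iff.mp this

end GenSet
namespace GenSet

open List

variable {Γ : Type*} [Group Γ] {U : GenSet Γ}

lemma one_mem_ball (ρ : ℕ) : (1 : Γ) ∈ U.ball 1 ρ := by
  show U.dist 1 1 ≤ ρ
  simp

/-- Any infinite component of the complement of a finite set contains the canonical
infinite component of a large ball's complement. -/
lemma infinite_comp_sub (hone : U.OneEnded) {F : Set Γ} (hF : F.Finite)
    {ρ : ℕ} (hball : F ⊆ U.ball 1 ρ) {g₀ : Γ} (hg₀ : g₀ ∈ (U.ball 1 ρ)ᶜ)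
    (hg₀inf : (U.comp (U.ball 1 ρ)ᶜ g₀).Infinite)
    (huniq : ∀ h ∈ (U.ball 1 ρ)ᶜ, (U.comp (U.ball 1 ρ)ᶜ h).Infinite →
      U.comp (U.ball 1 ρ)ᶜ h = U.comp (U.ball 1 ρ)ᶜ g₀)
    {x : Γ} (hx : x ∉ F) (hxi : (U.comp Fᶜ x).Infinite) :
    U.comp (U.ball 1 ρ)ᶜ g₀ ⊆ U.comp Fᶜ x := by
  classical
  set ball := U.ball 1 ρ with hballdef
  set W := U.comp Fᶜ x with hW
  have hWdiff : (W \ ball).Infinite := hxi.diff (ball_finite 1 ρ)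
  -- components of ballᶜ contained in W
  set C : Set (Set Γ) := {V : Set Γ | ∃ z, z ∉ ball ∧ V = U.comp ballᶜ z} with hC
  have hCfin : C.Finite := comps_finite (ball_finite 1 ρ) ⟨1, one_mem_ball ρ⟩
  set C' : Set (Set Γ) := {V ∈ C | V ⊆ W} with hC'
  have hcover : W \ ball ⊆ ⋃₀ C' := by
    intro u hu
    have huball : u ∉ ball := hu.2
    have huW : u ∈ W := hu.1
    refine Set.mem_sUnion.2 ⟨U.comp ballᶜ u, ⟨⟨u, huball, rfl⟩, ?_⟩, mem_comp_self huball⟩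
    intro v hv
    have hv' : U.ConnIn Fᶜ u v := by
      obtain ⟨l, hl, hchain, hmem, hhead, hlast⟩ := hv
      exact ⟨l, hl, hchain, fun z hz => fun hzF => (hmem z hz) (hball hzF), hhead, hlast⟩
    have : U.comp Fᶜ x = U.comp Fᶜ u := comp_eq_of_mem huW
    rw [hW, this]
    exact hv'
  have hC'fin : C'.Finite := hCfin.subset (Set.sep_subset _ _)
  -- some member of C' is infinite
  have : ∃ V ∈ C', V.Infinite := by
    by_contra hcon
    push_neg at hcon
    have : (⋃₀ C').Finite := Set.Finite.sUnion hC'fin (fun V hV => hcon V hV)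
    exact hWdiff (this.subset hcover)
  obtain ⟨V, ⟨⟨z, hz, rfl⟩, hVW⟩, hVinf⟩ := this
  have := huniq z hz hVinf
  rw [← this]
  exact hVW

/-- Uniqueness of the infinite component of the complement of a finite set. -/
lemma infinite_comp_unique (hone : U.OneEnded) {F : Set Γ} (hF : F.Finite)
    {x y : Γ} (hx : x ∉ F) (hy : y ∉ F)
    (hxi : (U.comp Fᶜ x).Infinite) (hyi : (U.comp Fᶜ y).Infinite) :
    U.comp Fᶜ x = U.comp Fᶜ y := by
  classical
  -- find ρ with F ⊆ ball 1 ρ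
  obtain ⟨ρ, hρ⟩ : ∃ ρ : ℕ, ∀ f ∈ F, U.dist 1 f ≤ ρ := by
    obtain ⟨n, hn⟩ := (hF.image (U.dist 1)).bddAbove
    exact ⟨n, fun f hf => hn ⟨f, hf, rfl⟩⟩
  have hball : F ⊆ U.ball 1 ρ := fun f hf => hρ f hf
  obtain ⟨g₀, hg₀, hg₀inf, huniq⟩ := hone ρ
  have h1 := infinite_comp_sub hone hF hball hg₀ hg₀inf huniq hx hxi
  have h2 := infinite_comp_sub hone hF hball hg₀ hg₀inf huniq hy hyi
  have hg₀K : g₀ ∈ U.comp (U.ball 1 ρ)ᶜ g₀ := mem_comp_self hg₀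
  have hgx : g₀ ∈ U.comp Fᶜ x := h1 hg₀K
  have hgy : g₀ ∈ U.comp Fᶜ y := h2 hg₀K
  rw [comp_eq_of_mem hgx, comp_eq_of_mem hgy]

end GenSet
namespace GenSet

open List

variable {G : Type*} [Group G] {S : GenSet G} {H : Subgroup G} {T : GenSet H}

lemma dist_coe_le (hsub : ∀ t ∈ T.carrier, (t : G) ∈ S.carrier) (a b : H) :
    S.dist (a : G) (b : G) ≤ T.dist a b := by
  obtain ⟨w, hw, hwl, hwp⟩ := T.dist_exists_word a b
  have hw' : S.IsWord (w.map (Subtype.val)) := by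
    intro x hx
    obtain ⟨t, ht, rfl⟩ := List.mem_map.1 hx
    exact hsub t (hw t ht)
  have hprod : (a : G) * (w.map Subtype.val).prod = (b : G) := by
    have : (w.map (Subtype.val)).prod = ((w.prod : H) : G) := by
      rw [← Subgroup.coe_subtype]
      exact List.prod_hom w H.subtype
    rw [this, ← Subgroup.coe_mul, hwp]
  calc S.dist (a : G) (b : G) ≤ (w.map Subtype.val).length := S.dist_le_word hw' hprod
    _ = T.dist a b := by simpa using hwl

lemma adj_coe (hsub : ∀ t ∈ T.carrier, (t : G) ∈ S.carrier) {a b : H} (h : T.adj a b) :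
    S.adj (a : G) (b : G) := by
  unfold adj at h ⊢
  have : ((a : G))⁻¹ * (b : G) = ((a⁻¹ * b : H) : G) := by push_cast; ring_nf
  rw [this]
  exact hsub _ h

/-- From narrowness, for every radius there is a finite "enclosure" of the ball with
small inner boundary, whose complement is infinite and connected. -/
lemma exists_enclosure (hsub : ∀ t ∈ T.carrier, (t : G) ∈ S.carrier)
    (hone : T.OneEnded) {i : ℕ}
    (hnar : ∀ (r : ℕ) (c : G),
      {c' : G | ¬ ∃ C : Finset G, C.card ≤ i ∧
        S.Separates (↑C) (S.ball c r) (S.ball c' r)}.Finite)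
    (r : ℕ) :
    ∃ A : Set H, A.Finite ∧ T.ball 1 r ⊆ A ∧ Aᶜ.Infinite ∧
      (∀ x ∈ Aᶜ, ∀ y ∈ Aᶜ, T.ConnIn Aᶜ x y) ∧
      ∃ E : Finset H, E.card ≤ i ∧ ∀ x y : H, x ∈ A → T.adj x y → y ∉ A → x ∈ E := by
  classical
  -- H is infinite
  have hHinf : Infinite H := by
    obtain ⟨g₀, _, hg₀inf, _⟩ := hone 0
    haveI : Infinite ↥(T.comp (T.ball 1 0)ᶜ g₀) := hg₀inf.to_subtype
    exact Infinite.of_injective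
      (fun x : ↥(T.comp (T.ball 1 0)ᶜ g₀) => (x : H)) Subtype.val_injective
  -- pick a good center h₀
  have hbad : {c' : G | ¬ ∃ C : Finset G, C.card ≤ i ∧
      S.Separates (↑C) (S.ball 1 r) (S.ball c' r)}.Finite := hnar r 1
  have hbadH : {h : H | ¬ ∃ C : Finset G, C.card ≤ i ∧
      S.Separates (↑C) (S.ball 1 r) (S.ball (h : G) r)}.Finite := by
    have := hbad.preimage (f := fun h : H => (h : G)) (Subtype.val_injective.injOn)
    exact this
  obtain ⟨h₀, hh₀⟩ : ∃ h₀ : H, ¬ h₀ ∈ {h : H | ¬ ∃ C : Finset G, C.card ≤ i ∧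
      S.Separates (↑C) (S.ball 1 r) (S.ball (h : G) r)} := by
    have : ({h : H | ¬ ∃ C : Finset G, C.card ≤ i ∧
        S.Separates (↑C) (S.ball 1 r) (S.ball (h : G) r)}ᶜ).Infinite := by
      have := Set.infinite_univ (α := H)
      have h2 : ({h : H | ¬ ∃ C : Finset G, C.card ≤ i ∧
          S.Separates (↑C) (S.ball 1 r) (S.ball (h : G) r)}ᶜ) =
          Set.univ \ {h : H | ¬ ∃ C : Finset G, C.card ≤ i ∧
          S.Separates (↑C) (S.ball 1 r) (S.ball (h : G) r)} := by
        simp [Set.compl_eq_univ_diff]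
      rw [h2]
      exact this.diff hbadH
    obtain ⟨h₀, hh₀⟩ := this.nonempty
    exact ⟨h₀, hh₀⟩
  rw [Set.mem_setOf_eq, not_not] at hh₀
  obtain ⟨C, hCcard, hCsep⟩ := hh₀
  -- the separating set inside H
  set D : Finset H := C.preimage Subtype.val (Subtype.val_injective.injOn) with hD
  have hDcard : D.card ≤ i := by
    refine le_trans ?_ hCcard
    exact Finset.card_le_card_of_injOn (fun d => (d : G))
      (fun d hd => by simpa [hD, Finset.mem_preimage] using hd)
      (Subtype.val_injective.injOn)
  -- T-separation
  have Tsep : ∀ (l : List H) (hl : l ≠ []), List.Chain' T.adj l →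
      l.head hl ∈ T.ball 1 r → l.getLast hl ∈ T.ball h₀ r → ∃ x ∈ l, x ∈ (D : Set H) := by
    intro l hl hchain hhead hlast
    have hml : l.map (Subtype.val) ≠ [] := by
      intro hc
      exact hl (List.map_eq_nil_iff.1 hc)
    have hmchain : List.Chain' S.adj (l.map Subtype.val) :=
      (List.isChain_map _).2 (hchain.imp (fun a b hab => adj_coe hsub hab))
    have hmhead : (l.map Subtype.val).head hml ∈ S.ball 1 r := by
      rw [List.head_map]
      show S.dist 1 _ ≤ r
      calc S.dist 1 ((l.head hl : H) : G) = S.dist ((1 : H) : G) ((l.head hl : H) : G) := by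
            norm_num
        _ ≤ T.dist 1 (l.head hl) := dist_coe_le hsub _ _
        _ ≤ r := hhead
    have hmlast : (l.map Subtype.val).getLast hml ∈ S.ball (h₀ : G) r := by
      rw [List.getLast_map]
      show S.dist (h₀ : G) _ ≤ r
      calc S.dist ((h₀ : H) : G) ((l.getLast hl : H) : G) ≤ T.dist h₀ (l.getLast hl) :=
            dist_coe_le hsub _ _
        _ ≤ r := hlast
    obtain ⟨x, hxl, hxC⟩ := hCsep (l.map Subtype.val) hml hmchain hmhead hmlast
    obtain ⟨z, hz, rfl⟩ := List.mem_map.1 hxl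
    refine ⟨z, hz, ?_⟩
    simpa [hD, Finset.mem_preimage] using hxC
  -- the unique infinite component of the complement of D
  obtain ⟨ρ, hρ⟩ : ∃ ρ : ℕ, ∀ d ∈ (D : Set H), T.dist 1 d ≤ ρ := by
    obtain ⟨n, hn⟩ := (D.finite_toSet.image (T.dist 1)).bddAbove
    exact ⟨n, fun d hd => hn ⟨d, hd, rfl⟩⟩
  have hDball : (D : Set H) ⊆ T.ball 1 ρ := fun d hd => hρ d hd
  obtain ⟨g₀, hg₀, hg₀inf, huniq⟩ := hone ρ
  set W : Set H := T.comp ((D : Set H))ᶜ g₀ with hWdef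
  have hWinf : W.Infinite := by
    refine hg₀inf.mono ?_
    exact comp_mono (Set.compl_subset_compl.2 hDball) g₀
  have hWD : W ⊆ ((D : Set H))ᶜ := comp_subset g₀
  -- dichotomy: one of the two balls misses W
  have hdich : (T.ball 1 r ∩ W = ∅) ∨ (T.ball h₀ r ∩ W = ∅) := by
    by_contra hcon
    push_neg at hcon
    obtain ⟨h1, h2⟩ := hcon
    obtain ⟨x, hxball, hxW⟩ := h1
    obtain ⟨y, hyball, hyW⟩ := h2
    have hconn : T.ConnIn ((D : Set H))ᶜ x y := (ConnIn.symm hxW).trans hyW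
    obtain ⟨l, hl, hchain, hmem, hhead, hlast⟩ := hconn
    obtain ⟨w, hwl, hwD⟩ := Tsep l hl hchain (hhead ▸ hxball) (hlast ▸ hyball)
    exact (hmem w hwl) hwD
  -- the swallowed center z
  obtain ⟨z, hzball⟩ : ∃ z : H, T.ball z r ∩ W = ∅ := by
    rcases hdich with h | h
    · exact ⟨1, h⟩
    · exact ⟨h₀, h⟩
  -- D is nonempty
  have hDne : ((D : Set H)).Nonempty := by
    by_contra hDe
    rw [Set.not_nonempty_iff_eq_empty] at hDe
    have : z ∈ W := by
      rw [hWdef, hDe]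
      have := ConnIn.symm (exists_connIn_univ (U := T) z g₀)
      simpa [comp] using this
    have hz : z ∈ T.ball z r := by show T.dist z z ≤ r; simp
    exact Set.eq_empty_iff_forall_notMem.1 hzball z ⟨hz, this⟩
  -- Wᶜ is finite
  have hWcfin : (Wᶜ : Set H).Finite := by
    have hsplit : (Wᶜ : Set H) ⊆ (D : Set H) ∪ (((D : Set H))ᶜ \ W) := by
      intro u hu
      by_cases hud : u ∈ (D : Set H)
      · exact Or.inl hud
      · exact Or.inr ⟨hud, hu⟩
    have hpart : ((((D : Set H))ᶜ \ W) : Set H).Finite := by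
      have hcols : {V : Set H | ∃ x, x ∉ (D : Set H) ∧ V = T.comp ((D : Set H))ᶜ x}.Finite :=
        comps_finite D.finite_toSet hDne
      have hcover : (((D : Set H))ᶜ \ W) ⊆
          ⋃₀ {V ∈ {V : Set H | ∃ x, x ∉ (D : Set H) ∧ V = T.comp ((D : Set H))ᶜ x} | V ≠ W} := by
        intro u hu
        refine Set.mem_sUnion.2 ⟨T.comp ((D : Set H))ᶜ u, ⟨⟨u, hu.1, rfl⟩, ?_⟩, mem_comp_self hu.1⟩
        intro hVW
        exact hu.2 (hVW ▸ mem_comp_self hu.1)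
      refine (Set.Finite.sUnion (hcols.subset (Set.sep_subset _ _)) ?_).subset hcover
      rintro V ⟨⟨x, hx, rfl⟩, hVne⟩
      by_contra hVinf
      have hg₀D : g₀ ∉ (D : Set H) := fun hgD => hg₀ (hDball hgD)
      have : T.comp ((D : Set H))ᶜ x = W :=
        infinite_comp_unique hone D.finite_toSet hx hg₀D hVinf hWinf
      exact hVne this
    exact ((D.finite_toSet).union hpart).subset hsplit
  -- translate: A := z⁻¹ • Wᶜ
  refine ⟨{u : H | z * u ∈ Wᶜ}, ?_, ?_, ?_, ?_, ?_⟩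
  · -- finite
    have : {u : H | z * u ∈ Wᶜ} = (fun u : H => z * u) ⁻¹' (Wᶜ) := rfl
    rw [this]
    exact hWcfin.preimage ((mul_right_injective z).injOn)
  · -- ball inclusion
    intro u hu
    have hdist : T.dist z (z * u) ≤ r := by
      have h1 : T.dist (z * 1) (z * u) = T.dist 1 u := T.dist_mul_left z 1 u
      rw [mul_one] at h1
      rw [show T.dist z (z * u) = T.dist 1 u from h1]
      exact hu
    intro hW
    exact Set.eq_empty_iff_forall_notMem.1 hzball (z * u) ⟨hdist, hW⟩
  · -- complement infinite
    have hcompl : {u : H | z * u ∈ Wᶜ}ᶜ = (fun w : H => z⁻¹ * w) '' W := by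
      ext u
      simp only [Set.mem_compl_iff, Set.mem_setOf_eq, not_not, Set.mem_image]
      constructor
      · intro hu; exact ⟨z * u, hu, by group⟩
      · rintro ⟨w, hw, rfl⟩; simpa [mul_assoc] using hw
    rw [hcompl]
    exact hWinf.image ((mul_right_injective z⁻¹).injOn)
  · -- complement connected
    intro x hx y hy
    simp only [Set.mem_compl_iff, Set.mem_setOf_eq, not_not] at hx hy
    have hxW : z * x ∈ W := hx
    have hyW : z * y ∈ W := hy
    have hconn : T.ConnIn ((D : Set H))ᶜ (z * x) (z * y) := (ConnIn.symm hxW).trans hyW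
    obtain ⟨l, hl, hchain, hmem, hhead, hlast⟩ := hconn
    have hmemW : ∀ w ∈ l, w ∈ W := by
      intro w hw
      have := connIn_of_mem_path hl hchain hmem w hw
      rw [hhead] at this
      have hWx : W = T.comp ((D : Set H))ᶜ (z * x) := comp_eq_of_mem hxW
      rw [hWx]
      exact this
    refine ⟨l.map (fun w => z⁻¹ * w), ?_, ?_, ?_, ?_, ?_⟩
    · intro hc; exact hl (List.map_eq_nil_iff.1 hc)
    · exact (List.isChain_map _).2 (hchain.imp (fun a b hab => T.adj_mul_left z⁻¹ hab))
    · intro w hw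
      obtain ⟨v, hv, rfl⟩ := List.mem_map.1 hw
      simp only [Set.mem_compl_iff, Set.mem_setOf_eq, not_not]
      have : z * (z⁻¹ * v) = v := by group
      rw [this]
      exact hmemW v hv
    · rw [List.head_map, hhead]; group
    · rw [List.getLast_map, hlast]; group
  · -- boundary
    refine ⟨D.image (fun d => z⁻¹ * d), le_trans (Finset.card_image_le) hDcard, ?_⟩
    intro x y hxA hadj hyA
    have hyW : z * y ∈ W := by
      simpa using hyA
    have hxWc : z * x ∈ Wᶜ := hxA
    have hadj' : T.adj (z * x) (z * y) := T.adj_mul_left z hadj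
    have hxD : z * x ∈ (D : Set H) := by
      by_contra hxD
      have hconn : T.ConnIn ((D : Set H))ᶜ (z * y) (z * x) := by
        refine ⟨[z * y, z * x], by simp, ?_, ?_, by simp, by simp⟩
        · exact List.isChain_pair.2 (T.adj_symm hadj')
        · intro w hw
          rcases List.mem_cons.1 hw with rfl | hw
          · exact hWD hyW
          · rcases List.mem_cons.1 hw with rfl | hw
            · exact hxD
            · simp at hw
      have : z * x ∈ W := by
        have hWy : W = T.comp ((D : Set H))ᶜ (z * y) := comp_eq_of_mem hyW
        rw [hWy]
        exact hconn
      exact hxWc this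
    refine Finset.mem_image.2 ⟨z * x, ?_, by group⟩
    simpa using hxD


end GenSet
namespace GenSet

open List

variable {Γ : Type*} [Group Γ] {U : GenSet Γ}

lemma dist_comm (g h : Γ) : U.dist g h = U.dist h g := by
  have key : ∀ a b : Γ, U.dist a b ≤ U.dist b a := by
    intro a b
    obtain ⟨w, hw, hwl, hwp⟩ := U.dist_exists_word b a
    have hw' : U.IsWord ((w.map (·⁻¹)).reverse) := by
      intro x hx
      simp only [List.mem_reverse, List.mem_map] at hx
      obtain ⟨c, hc, rfl⟩ := hx
      exact U.symm c (hw c hc)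
    have hp : a * ((w.map (·⁻¹)).reverse).prod = b := by
      rw [List.prod_reverse_noncomm]
      simp only [List.map_map]
      have : (w.map (fun x => x⁻¹) |>.map (fun x => x⁻¹)).prod = w.prod := by
        simp [Function.comp]
      rw [show ((fun x : Γ => x⁻¹) ∘ fun x : Γ => x⁻¹) = id by funext x; simp] at *
      simp only [List.map_id]
      rw [← hwp]
      group
    have := U.dist_le_word hw' hp
    simpa [hwl] using this
  exact le_antisymm (key g h) (key h g)

lemma anchored_of_enclosure {i r : ℕ} {A : Set Γ}
    (hAfin : A.Finite) (hball : U.ball 1 r ⊆ A) (hAcinf : Aᶜ.Infinite)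
    (hconn : ∀ x ∈ Aᶜ, ∀ y ∈ Aᶜ, U.ConnIn Aᶜ x y)
    {E : Finset Γ} (hEcard : E.card ≤ i)
    (hE : ∀ x y : Γ, x ∈ A → U.adj x y → y ∉ A → x ∈ E) :
    ∃ (B : Set Γ) (E' : Finset Γ), E'.card ≤ i ∧ (1 : Γ) ∈ B ∧
      (∀ s ≤ r, ∃ u ∈ B, U.dist 1 u = s) ∧
      (∀ s : ℕ, ∃ Y : Finset Γ, (↑Y : Set Γ) ⊆ Bᶜ ∧ (∀ y ∈ Y, U.dist 1 y ≤ s + 1) ∧ s ≤ Y.card) ∧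
      (∀ x y : Γ, x ∈ B → U.adj x y → y ∉ B → x ∈ E') := by
  classical
  -- distance from 1 to the complement
  have hAcne : Aᶜ.Nonempty := hAcinf.nonempty
  set dset : Set ℕ := {n | ∃ x ∈ Aᶜ, U.dist 1 x = n} with hdset
  have hdne : dset.Nonempty := by
    obtain ⟨x, hx⟩ := hAcne
    exact ⟨U.dist 1 x, x, hx, rfl⟩
  set L : ℕ := sInf dset with hL
  obtain ⟨w, hwAc, hwL⟩ : ∃ w ∈ Aᶜ, U.dist 1 w = L := Nat.sInf_mem hdne
  have hLlb : ∀ x ∈ Aᶜ, L ≤ U.dist 1 x := fun x hx => Nat.sInf_le ⟨x, hx, rfl⟩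
  have hLr : r + 1 ≤ L := by
    by_contra hc
    push_neg at hc
    have : w ∈ U.ball 1 r := by
      show U.dist 1 w ≤ r
      omega
    exact hwAc (hball this)
  -- realizing word
  obtain ⟨v, hv, hvl, hvp⟩ := U.dist_exists_word 1 w
  rw [hwL] at hvl
  have hvp' : v.prod = w := by simpa using hvp
  -- the points along the geodesic
  set q : ℕ → Γ := fun j => (v.take j).prod with hq
  have hq_dist : ∀ a b : ℕ, a ≤ b → b ≤ L → U.dist (q a) (q b) ≤ b - a := by
    intro a b hab hbL
    have hseg : U.IsWord ((v.take b).drop a) :=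
      fun x hx => hv x (List.take_subset b v (List.drop_subset _ _ hx))
    have hprod : q a * ((v.take b).drop a).prod = q b := by
      have h1 : (v.take b).take a = v.take a := by
        rw [List.take_take]
        congr 1
        omega
      have h2 : (v.take b).take a ++ (v.take b).drop a = v.take b := List.take_append_drop _ _
      have : (v.take a).prod * ((v.take b).drop a).prod = (v.take b).prod := by
        rw [← h1, ← List.prod_append, h2]
      simpa [hq] using this
    have hlen : ((v.take b).drop a).length = b - a := by
      rw [List.length_drop, List.length_take]
      have : b ≤ v.length := by omega
      omega
    have := U.dist_le_word hseg hprod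
    omega
  have hq_one : ∀ j : ℕ, j ≤ L → U.dist 1 (q j) ≤ j := by
    intro j hj
    have := hq_dist 0 j (Nat.zero_le j) hj
    simpa [hq] using this
  have hq_comp : ∀ (j : ℕ), j ≤ L → ∀ x ∈ Aᶜ, L - j ≤ U.dist (q j) x := by
    intro j hj x hx
    have h1 : L ≤ U.dist 1 x := hLlb x hx
    have h2 : U.dist 1 x ≤ U.dist 1 (q j) + U.dist (q j) x := U.dist_triangle _ _ _
    have h3 := hq_one j hj
    omega
  have hqL : q L = w := by
    have hTL : v.take L = v := List.take_of_length_le (by omega)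
    show (v.take L).prod = w
    rw [hTL, hvp']
  -- the anchor point p
  set p : Γ := q (L - 1) with hp
  have hpA : p ∈ A := by
    by_contra hpc
    have h := hq_comp (L - 1) (by omega) p hpc
    rw [hp, U.dist_self] at h
    omega
  have hpw : U.dist p w ≤ 1 := by
    have h := hq_dist (L - 1) L (by omega) (le_refl L)
    rw [hqL] at h
    calc U.dist p w = U.dist (q (L-1)) w := by rw [hp]
      _ ≤ L - (L-1) := h
      _ ≤ 1 := by omega
  refine ⟨{u : Γ | p * u ∈ A}, E.image (fun d => p⁻¹ * d), ?_, ?_, ?_, ?_, ?_⟩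
  · exact le_trans (Finset.card_image_le) hEcard
  · show p * 1 ∈ A
    rw [mul_one]; exact hpA
  · -- points at every distance s ≤ r
    intro s hs
    refine ⟨p⁻¹ * q (L - 1 - s), ?_, ?_⟩
    · show p * (p⁻¹ * q (L - 1 - s)) ∈ A
      have hmem : q (L - 1 - s) ∈ A := by
        by_contra hqc
        have h := hq_comp (L - 1 - s) (by omega) _ hqc
        rw [U.dist_self] at h
        omega
      have : p * (p⁻¹ * q (L - 1 - s)) = q (L - 1 - s) := by group
      rw [this]; exact hmem
    · have h1 : U.dist 1 (p⁻¹ * q (L - 1 - s)) = U.dist p (q (L - 1 - s)) := by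
        have := U.dist_mul_left p 1 (p⁻¹ * q (L - 1 - s))
        rw [mul_one] at this
        rw [← this]
        congr 1
        group
      rw [h1]
      have hub : U.dist p (q (L - 1 - s)) ≤ s := by
        have := hq_dist (L - 1 - s) (L - 1) (by omega) (by omega)
        rw [← hp] at this
        rw [dist_comm]
        omega
      have hlb : s ≤ U.dist p (q (L - 1 - s)) := by
        have h2 : L - (L - 1 - s) ≤ U.dist (q (L - 1 - s)) w := hq_comp _ (by omega) w hwAc
        have h3 : U.dist (q (L - 1 - s)) w ≤ U.dist (q (L - 1 - s)) p + U.dist p w :=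
          U.dist_triangle _ _ _
        have h4 : U.dist (q (L - 1 - s)) p = U.dist p (q (L - 1 - s)) := dist_comm _ _
        omega
      omega
  · -- complement contains many points close by
    intro s
    have hxj : ∀ j : ℕ, 1 ≤ j → j ≤ s → ∃ x ∈ Aᶜ, U.dist w x = j := by
      intro j h1j hjs
      obtain ⟨xfar, hxfar⟩ := (hAcinf.diff (ball_finite w s)).nonempty
      have hxfarA : xfar ∈ Aᶜ := hxfar.1
      have hxfard : s < U.dist w xfar := by
        by_contra hc
        push_neg at hc
        exact hxfar.2 hc
      obtain ⟨l, hl, hchain, hmem, hhead, hlast⟩ := hconn w hwAc xfar hxfarA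
      obtain ⟨x, hxl, hxd⟩ := path_ivt l hl hchain j
        (by rw [hhead, U.dist_self]; exact Nat.zero_le j) (by rw [hlast]; omega)
      exact ⟨x, hmem x hxl, hxd⟩
    choose xf hxfA hxfd using hxj
    let Y : Finset Γ := (Finset.Icc 1 s).attach.image
      (fun j => p⁻¹ * xf j.1 (Finset.mem_Icc.1 j.2).1 (Finset.mem_Icc.1 j.2).2)
    refine ⟨Y, ?_, ?_, ?_⟩
    · intro y hy
      simp only [Y, Finset.coe_image, Set.mem_image, Finset.mem_coe, Finset.mem_attach] at hy
      obtain ⟨j, -, rfl⟩ := hy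
      have hj1 := (Finset.mem_Icc.1 j.2).1
      have hj2 := (Finset.mem_Icc.1 j.2).2
      show ¬ (p * (p⁻¹ * xf j.1 hj1 hj2) ∈ A)
      have heq : p * (p⁻¹ * xf j.1 hj1 hj2) = xf j.1 hj1 hj2 := by group
      rw [heq]
      exact hxfA j.1 hj1 hj2
    · intro y hy
      simp only [Y, Finset.mem_image, Finset.mem_attach] at hy
      obtain ⟨j, -, rfl⟩ := hy
      have hj1 := (Finset.mem_Icc.1 j.2).1
      have hj2 := (Finset.mem_Icc.1 j.2).2
      have h1 : U.dist 1 (p⁻¹ * xf j.1 hj1 hj2) = U.dist p (xf j.1 hj1 hj2) := by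
        have h0 := U.dist_mul_left p 1 (p⁻¹ * xf j.1 hj1 hj2)
        rw [mul_one] at h0
        rw [← h0]
        congr 1
        group
      rw [h1]
      have h2 := U.dist_triangle p w (xf j.1 hj1 hj2)
      have h3 := hxfd j.1 hj1 hj2
      omega
    · have hcard : Y.card = s := by
        rw [Finset.card_image_of_injective]
        · simp
        · intro a b hab
          have h1 : xf a.1 (Finset.mem_Icc.1 a.2).1 (Finset.mem_Icc.1 a.2).2
              = xf b.1 (Finset.mem_Icc.1 b.2).1 (Finset.mem_Icc.1 b.2).2 :=
            mul_left_cancel hab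
          have ha := hxfd a.1 (Finset.mem_Icc.1 a.2).1 (Finset.mem_Icc.1 a.2).2
          have hb := hxfd b.1 (Finset.mem_Icc.1 b.2).1 (Finset.mem_Icc.1 b.2).2
          rw [h1] at ha
          rw [ha] at hb
          exact Subtype.ext hb
      omega
  · -- boundary control
    intro x y hx hadj hy
    have hpx : p * x ∈ A := hx
    have hpy : p * y ∉ A := hy
    have hadj' : U.adj (p * x) (p * y) := U.adj_mul_left p hadj
    have := hE (p * x) (p * y) hpx hadj' hpy
    refine Finset.mem_image.2 ⟨p * x, this, by group⟩

end GenSet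
namespace GenSet

open List Filter

variable {Γ : Type*} [Group Γ] {U : GenSet Γ}

/-- One-endedness is inconsistent with having, at every scale, an anchored set with
boundary of size at most `i`, deep interior, and a fat nearby exterior. -/
lemma no_uniform_anchored (hone : U.OneEnded) {i : ℕ}
    (hanch : ∀ r : ℕ, ∃ (B : Set Γ) (E' : Finset Γ), E'.card ≤ i ∧ (1 : Γ) ∈ B ∧
      (∀ s ≤ r, ∃ u ∈ B, U.dist 1 u = s) ∧
      (∀ s : ℕ, ∃ Y : Finset Γ, (↑Y : Set Γ) ⊆ Bᶜ ∧ (∀ y ∈ Y, U.dist 1 y ≤ s + 1) ∧ s ≤ Y.card) ∧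
      (∀ x y : Γ, x ∈ B → U.adj x y → y ∉ B → x ∈ E')) : False := by
  classical
  choose B E hEcard h1B hsph hfat hbd using hanch
  set 𝒰 : Ultrafilter ℕ := hyperfilter ℕ with h𝒰
  set Gt : Set Γ := {x : Γ | {r | x ∈ B r} ∈ 𝒰} with hGt
  have hmem𝒰 : ∀ x : Γ, x ∈ Gt ↔ {r | x ∈ B r} ∈ 𝒰 := fun x => Iff.rfl
  have hnotmem : ∀ x : Γ, x ∉ Gt ↔ {r | x ∉ B r} ∈ 𝒰 := by
    intro x
    rw [hmem𝒰, ← Ultrafilter.compl_mem_iff_notMem]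
    have : {r | x ∈ B r}ᶜ = {r | x ∉ B r} := by ext r; simp
    rw [this]
  have h1Gt : (1 : Γ) ∈ Gt := by
    rw [hmem𝒰]
    have : {r : ℕ | (1 : Γ) ∈ B r} = Set.univ := by
      ext r; simpa using h1B r
    rw [this]; exact Filter.univ_mem
  -- ultrafilter pigeonhole over a finite family
  have upick : ∀ (I : Finset Γ) (R : Set ℕ), R ∈ 𝒰 →
      (∀ r ∈ R, ∃ u ∈ I, u ∈ B r) → ∃ u ∈ I, {r | u ∈ B r} ∈ 𝒰 := by
    intro I R hR hcov
    by_contra hcon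
    push_neg at hcon
    have hints : (⋂ u ∈ (↑I : Set Γ), {r | u ∉ B r}) ∈ 𝒰 := by
      show _ ∈ (𝒰 : Filter ℕ)
      rw [Filter.biInter_mem I.finite_toSet]
      intro u hu
      have h1 : {r | u ∈ B r}ᶜ ∈ 𝒰 :=
        Ultrafilter.compl_mem_iff_notMem.2 (hcon u (by simpa using hu))
      have heq : {r | u ∈ B r}ᶜ = {r | u ∉ B r} := by ext r; simp
      rw [heq] at h1
      exact Ultrafilter.mem_coe.2 h1
    obtain ⟨r, hrR, hrI⟩ := Filter.nonempty_of_mem (Filter.inter_mem hR hints)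
    obtain ⟨u, huI, huB⟩ := hcov r hrR
    exact (Set.mem_iInter₂.1 hrI u (by simpa using huI)) huB
  -- points of Gt at every distance
  have hGtsph : ∀ s : ℕ, ∃ x ∈ Gt, U.dist 1 x = s := by
    intro s
    have hRs : {r : ℕ | s ≤ r} ∈ 𝒰 := by
      apply mem_hyperfilter_of_finite_compl
      refine (Set.finite_Iio s).subset ?_
      intro r hr
      simp only [Set.mem_compl_iff, Set.mem_setOf_eq, not_le] at hr
      simpa using hr
    have hsphfin : {u : Γ | U.dist 1 u = s}.Finite :=
      (ball_finite 1 s).subset (fun u hu => le_of_eq hu)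
    obtain ⟨u, huI, hu𝒰⟩ := upick hsphfin.toFinset {r : ℕ | s ≤ r} hRs (by
      intro r hr
      obtain ⟨u, huB, hud⟩ := hsph r s hr
      exact ⟨u, by simpa [Set.Finite.mem_toFinset] using hud, huB⟩)
    refine ⟨u, hu𝒰, by simpa [Set.Finite.mem_toFinset] using huI⟩
  choose usph husph hudist using hGtsph
  have hGtinf : Gt.Infinite :=
    Set.infinite_of_injective_forall_mem (f := usph)
      (fun a b hab => by rw [← hudist a, ← hudist b, hab]) husph
  -- the complement of Gt contains arbitrarily many points
  have hGtcgrow : ∀ s : ℕ, ∃ Z : Finset Γ, (↑Z : Set Γ) ⊆ Gtᶜ ∧ s ≤ Z.card := by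
    intro s
    have hBsfin : (U.ball 1 (s+1)).Finite := ball_finite 1 (s+1)
    set Fn : Finset Γ := hBsfin.toFinset with hFn
    have hvpick : ∃ v ∈ Fn.powerset, {r | Fn.filter (fun x => x ∈ B r) = v} ∈ 𝒰 := by
      by_contra hcon
      push_neg at hcon
      have hints : (⋂ v ∈ (↑Fn.powerset : Set (Finset Γ)),
          {r | Fn.filter (fun x => x ∈ B r) = v}ᶜ) ∈ 𝒰 := by
        show _ ∈ (𝒰 : Filter ℕ)
        rw [Filter.biInter_mem Fn.powerset.finite_toSet]
        intro v hv
        exact Ultrafilter.mem_coe.2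
          (Ultrafilter.compl_mem_iff_notMem.2 (hcon v (by simpa using hv)))
      obtain ⟨r, hr⟩ := Filter.nonempty_of_mem hints
      have hmem : Fn.filter (fun x => x ∈ B r) ∈ Fn.powerset :=
        Finset.mem_powerset.2 (Finset.filter_subset _ _)
      exact (Set.mem_iInter₂.1 hr _ (Finset.mem_coe.2 hmem)) rfl
    obtain ⟨v, hv, hRv⟩ := hvpick
    obtain ⟨r₀, hr₀⟩ := Filter.nonempty_of_mem hRv
    obtain ⟨Y, hYsub, hYdist, hYcard⟩ := hfat r₀ s
    have hr₀eq : Fn.filter (fun x => x ∈ B r₀) = v := hr₀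
    refine ⟨Fn \ v, ?_, ?_⟩
    · intro x hx
      simp only [Finset.coe_sdiff, Set.mem_diff, Finset.mem_coe] at hx
      show x ∉ Gt
      rw [hnotmem]
      refine 𝒰.toFilter.mem_of_superset hRv ?_
      intro r hr
      simp only [Set.mem_setOf_eq] at hr ⊢
      intro hxB
      exact hx.2 (hr ▸ Finset.mem_filter.2 ⟨hx.1, hxB⟩)
    · have hYFn : Y ⊆ Fn := by
        intro y hy
        rw [hFn, Set.Finite.mem_toFinset]
        exact hYdist y hy
      have hYsubd : Y ⊆ Fn \ v := by
        intro y hy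
        refine Finset.mem_sdiff.2 ⟨hYFn hy, ?_⟩
        intro hyv
        have : y ∈ Fn.filter (fun x => x ∈ B r₀) := hr₀eq ▸ hyv
        exact (hYsub hy) (Finset.mem_filter.1 this).2
      calc s ≤ Y.card := hYcard
        _ ≤ (Fn \ v).card := Finset.card_le_card hYsubd
  have hGtcinf : Gtᶜ.Infinite := by
    intro hfin
    obtain ⟨Z, hZsub, hZcard⟩ := hGtcgrow (hfin.toFinset.card + 1)
    have hsub : Z ⊆ hfin.toFinset := by
      intro z hz
      rw [Set.Finite.mem_toFinset]
      exact hZsub hz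
    have := Finset.card_le_card hsub
    omega
  -- the boundary of Gt
  set Fb : Set Γ := {x | x ∈ Gt ∧ ∃ y, U.adj x y ∧ y ∉ Gt} with hFb
  have hFbGt : Fb ⊆ Gt := fun x hx => hx.1
  have hFbcard : ∀ Z : Finset Γ, (↑Z : Set Γ) ⊆ Fb → Z.card ≤ i := by
    intro Z hZ
    have hwit : ∀ x : Γ, x ∈ Z → ∃ y, U.adj x y ∧ {r | y ∉ B r} ∈ 𝒰 := by
      intro x hxZ
      obtain ⟨y, hadj, hyGt⟩ := (hZ hxZ).2
      exact ⟨y, hadj, (hnotmem y).1 hyGt⟩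
    choose yw hywadj hyw𝒰 using hwit
    have hints : (⋂ x ∈ (↑Z.attach : Set {x // x ∈ Z}),
        ({r | x.1 ∈ B r} ∩ {r | yw x.1 x.2 ∉ B r})) ∈ 𝒰 := by
      show _ ∈ (𝒰 : Filter ℕ)
      rw [Filter.biInter_mem Z.attach.finite_toSet]
      intro x _
      exact Ultrafilter.mem_coe.2 (Filter.inter_mem ((hZ x.2).1) (hyw𝒰 x.1 x.2))
    obtain ⟨r, hr⟩ := Filter.nonempty_of_mem hints
    have hZE : Z ⊆ E r := by
      intro x hxZ
      have hx := Set.mem_iInter₂.1 hr ⟨x, hxZ⟩ (by simp)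
      exact hbd r x (yw x hxZ) hx.1 (hywadj x hxZ) hx.2
    exact le_trans (Finset.card_le_card hZE) (hEcard r)
  have hFbfin : Fb.Finite := by
    by_contra hinf
    obtain ⟨Z, hZsub, hZcard⟩ := (show Fb.Infinite from hinf).exists_subset_card_eq (i+1)
    have := hFbcard Z hZsub
    omega
  have hFbne : Fb.Nonempty := by
    obtain ⟨c0, hc0⟩ := hGtcinf.nonempty
    obtain ⟨l, hl, hchain, _, hhead, hlast⟩ := exists_connIn_univ (U := U) (1 : Γ) c0
    obtain ⟨a, b, hab, hbF, haF, _⟩ := first_cross (F := Gtᶜ) l hl hchain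
      (by rw [hhead]; simpa using h1Gt) (by rw [hlast]; exact hc0)
    exact ⟨a, by simpa using haF, b, hab, hbF⟩
  -- components of the complement of Fb stay on one side
  have hstay1 : ∀ x, x ∈ Gt \ Fb → U.comp Fbᶜ x ⊆ Gt \ Fb := by
    intro x hx v hv
    have hvFb : v ∉ Fb := (comp_subset (U := U) x) hv
    obtain ⟨l, hl, hchain, hmemm, hhead, hlast⟩ := hv
    have hvGt : ∀ z ∈ l, z ∈ Gt := by
      refine stay_in (F := Fb) (P := Gt) ?_ l hl hchain hmemm (by rw [hhead]; exact hx.1)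
      intro a b hadj haP hbP
      exact Or.inl ⟨haP, b, hadj, hbP⟩
    exact ⟨hlast ▸ hvGt _ (List.getLast_mem hl), hvFb⟩
  have hstay2 : ∀ x, x ∈ Gtᶜ → U.comp Fbᶜ x ⊆ Gtᶜ := by
    intro x hx v hv
    obtain ⟨l, hl, hchain, hmemm, hhead, hlast⟩ := hv
    have hvGtc : ∀ z ∈ l, z ∈ Gtᶜ := by
      refine stay_in (F := Fb) (P := Gtᶜ) ?_ l hl hchain hmemm (by rw [hhead]; exact hx)
      intro a b hadj haP hbP
      refine Or.inr ⟨by simpa using hbP, a, U.adj_symm hadj, haP⟩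
    exact hlast ▸ hvGtc _ (List.getLast_mem hl)
  -- pick infinite components on both sides
  have h𝒞Ffin : {V : Set Γ | ∃ x, x ∉ Fb ∧ V = U.comp Fbᶜ x}.Finite :=
    comps_finite hFbfin hFbne
  have hpick : ∀ (SS : Set Γ), SS.Infinite → (∀ x ∈ SS, x ∉ Fb) →
      (∀ x ∈ SS, U.comp Fbᶜ x ⊆ SS) →
      ∃ x, x ∉ Fb ∧ x ∈ SS ∧ (U.comp Fbᶜ x).Infinite := by
    intro SS hSSinf hSSF hSSsub
    have hcover : SS ⊆ ⋃₀ {V ∈ {V : Set Γ | ∃ x, x ∉ Fb ∧ V = U.comp Fbᶜ x} | V ⊆ SS} := by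
      intro x hx
      exact Set.mem_sUnion.2 ⟨U.comp Fbᶜ x, ⟨⟨x, hSSF x hx, rfl⟩, hSSsub x hx⟩,
        mem_comp_self (hSSF x hx)⟩
    by_contra hcon
    push_neg at hcon
    have hallfin : ∀ V ∈ {V ∈ {V : Set Γ | ∃ x, x ∉ Fb ∧ V = U.comp Fbᶜ x} | V ⊆ SS}, V.Finite := by
      rintro V ⟨⟨x, hxF, rfl⟩, hVS⟩
      by_contra hVinf
      exact hVinf (hcon x hxF (hVS (mem_comp_self hxF)))
    exact hSSinf ((Set.Finite.sUnion (h𝒞Ffin.subset (Set.sep_subset _ _)) hallfin).subset hcover)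
  obtain ⟨x₁, hx₁F, hx₁S, hV₁inf⟩ := hpick (Gt \ Fb) (hGtinf.diff hFbfin)
    (fun x hx => hx.2) hstay1
  obtain ⟨x₂, hx₂F, hx₂S, hV₂inf⟩ := hpick Gtᶜ hGtcinf
    (fun x hx => fun hF => hx (hFbGt hF)) hstay2
  have hVeq := infinite_comp_unique hone hFbfin hx₁F hx₂F hV₁inf hV₂inf
  have hx₁V : x₁ ∈ U.comp Fbᶜ x₁ := mem_comp_self hx₁F
  rw [hVeq] at hx₁V
  exact (hstay2 x₂ hx₂S hx₁V) hx₁S.1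

end GenSet
/-- If a finitely generated group `G` contains a one-ended finitely generated subgroup
`H` (with the generators of `G` chosen to include those of `H`), then `G` is wide. -/
theorem wide_of_oneEnded_subgroup {G : Type*} [Group G] (S : GenSet G)
    (H : Subgroup G) (T : GenSet H)
    (hsub : ∀ t ∈ T.carrier, (t : G) ∈ S.carrier)
    (hone : T.OneEnded) : ¬ S.Narrow := by
  intro hnarrow
  obtain ⟨i, hnar⟩ := hnarrow
  refine GenSet.no_uniform_anchored (U := T) hone (i := i) ?_
  intro r
  obtain ⟨A, hAfin, hball, hAcinf, hconn, E, hEcard, hE⟩ :=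
    GenSet.exists_enclosure hsub hone hnar r
  obtain ⟨Bset, E', hE'card, h1B, hsph, hfat, hbd⟩ :=
    GenSet.anchored_of_enclosure hAfin hball hAcinf hconn hEcard hE
  exact ⟨Bset, E', hE'card, h1B, hsph, hfat, hbd⟩
end
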